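/- arXiv:1912.05616 — 3 statements merged into one kernel-verified Lean document; each statement's English description precedes it below -/
import Mathlib

section
/- In any component-labelled transition system satisfying the non-interference condition, every J-fair path under fairness of components is just. -/
universe u v w x

structure CLTS (S : Type u) (Tr : Type v) (Act : Type w) (C : Type x) where
  source : Tr → S
  target : Tr → S
  label : Tr → Act
  B : Set Act
  comp : Tr → Set C
  comp_nonempty : ∀ t, (comp t).Nonempty

variable {S : Type u} {Tr : Type v} {Act : Type w} {C : Type x}

structure CPath (M : CLTS S Tr Act C) where
  len : ℕ∞
  states : ℕ → S
  trans : ℕ → Tr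
  src : ∀ i : ℕ, (i : ℕ∞) < len → M.source (trans i) = states i
  tgt : ∀ i : ℕ, (i : ℕ∞) < len → M.target (trans i) = states (i + 1)

def CLTS.nonBlocking (M : CLTS S Tr Act C) (t : Tr) : Prop := M.label t ∉ M.B

def CPath.progressing {M : CLTS S Tr Act C} (π : CPath M) : Prop :=
  π.len = ⊤ ∨ ∃ n : ℕ, π.len = (n : ℕ∞) ∧
    ∀ t : Tr, M.source t = π.states n → ¬ M.nonBlocking t

def CPath.just {M : CLTS S Tr Act C} (π : CPath M) : Prop :=
  ∀ t : Tr, M.nonBlocking t → ∀ i : ℕ, (i : ℕ∞) ≤ π.len → M.source t = π.states i →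
    ∃ j : ℕ, i ≤ j ∧ (j : ℕ∞) < π.len ∧ (M.comp t ∩ M.comp (π.trans j)).Nonempty

/-- J-fairness under fairness of components: for every suffix (starting point `k`) of the
path and every component `σ`, if the task `T_σ = {t | σ ∈ comp t}` is continuously enabled
on that suffix (enabled in every state and during every transition), then it occurs in it. -/
def CPath.JfairComponents {M : CLTS S Tr Act C} (π : CPath M) : Prop :=
  ∀ k : ℕ, (k : ℕ∞) ≤ π.len → ∀ σ : C,
    ((∀ i : ℕ, k ≤ i → (i : ℕ∞) ≤ π.len →
        ∃ t : Tr, σ ∈ M.comp t ∧ M.nonBlocking t ∧ M.source t = π.states i) ∧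
     (∀ j : ℕ, k ≤ j → (j : ℕ∞) < π.len →
        ∃ t : Tr, σ ∈ M.comp t ∧ M.nonBlocking t ∧ M.source t = M.source (π.trans j) ∧
          M.comp t ∩ M.comp (π.trans j) = ∅)) →
    ∃ j : ℕ, k ≤ j ∧ (j : ℕ∞) < π.len ∧ σ ∈ M.comp (π.trans j)

/-- in a CLTS satisfying the non-interference condition, every J-fair path
under fairness of components is just. -/
theorem jfair_components_implies_just (M : CLTS S Tr Act C)
    (hni : ∀ t v : Tr, M.source t = M.source v → M.comp t ∩ M.comp v = ∅ →
      ∃ u : Tr, M.source u = M.target v ∧ M.label u = M.label t ∧ M.comp u = M.comp t)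
    (π : CPath M) : π.JfairComponents → π.just := by
  intro hJ t ht i hi hsrc
  by_contra hno
  push_neg at hno
  have hdisj := hno
  obtain ⟨σ, hσ⟩ := M.comp_nonempty t
  -- key: at every state n ≥ i there is a transition with same label and comp as t
  have key : ∀ n : ℕ, i ≤ n → (n : ℕ∞) ≤ π.len →
      ∃ t' : Tr, M.source t' = π.states n ∧ M.label t' = M.label t ∧ M.comp t' = M.comp t := by
    intro n hn
    induction n, hn using Nat.le_induction with
    | base => exact fun _ => ⟨t, hsrc, rfl, rfl⟩
    | succ n hn ih =>
      intro hlen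
      have hnlt : (n : ℕ∞) < π.len :=
        lt_of_lt_of_le (by exact_mod_cast Nat.lt_succ_self n) hlen
      obtain ⟨t', hs', hl', hc'⟩ := ih hnlt.le
      have hsrcn : M.source t' = M.source (π.trans n) := by
        rw [hs', π.src n hnlt]
      have hd : M.comp t' ∩ M.comp (π.trans n) = ∅ := by
        rw [hc']; exact hdisj n hn hnlt
      obtain ⟨u, hu1, hu2, hu3⟩ := hni t' (π.trans n) hsrcn hd
      exact ⟨u, by rw [hu1, π.tgt n hnlt], by rw [hu2, hl'], by rw [hu3, hc']⟩
  obtain ⟨j, hij, hjlen, hmem⟩ := hJ i hi σ ⟨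
    fun n hn hnlen => by
      obtain ⟨t', h1, h2, h3⟩ := key n hn hnlen
      exact ⟨t', by rw [h3]; exact hσ, by unfold CLTS.nonBlocking; rw [h2]; exact ht, h1⟩,
    fun j hij hjlen => by
      obtain ⟨t', h1, h2, h3⟩ := key j hij hjlen.le
      refine ⟨t', by rw [h3]; exact hσ, by unfold CLTS.nonBlocking; rw [h2]; exact ht,
        by rw [h1, π.src j hjlen], by rw [h3]; exact hdisj j hij hjlen⟩⟩
  have : σ ∈ M.comp t ∩ M.comp (π.trans j) := ⟨hσ, hmem⟩
  rw [hno j hij hjlen] at this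
  exact this
end

section
/- The labelled transition system generated by the structural operational semantics of CCS (restricted to guarded choice), with components assigned by the rules in Table 1, satisfies the non-interference property: if transitions t and v have the same source and disjoint component sets, then there is a transition u from the target of v with the same action label and the same component set as t. -/
/-- CCS actions over a set of names: names, co-names, and the internal action τ. -/
inductive Act' (Name : Type) where
  | name : Name → Act' Name
  | coname : Name → Act' Name
  | tau : Act' Name

/-- Complementation of actions (τ is mapped to itself). -/
def Act'.co {Name : Type} : Act' Name → Act' Name
  | .name a => .coname a
  | .coname a => .name a
  | .tau => .tau

/-- Application of a relabelling to an action. -/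
def Act'.rel {Name : Type} (f : Name → Name) : Act' Name → Act' Name
  | .name a => .name (f a)
  | .coname a => .coname (f a)
  | .tau => .tau

/-- CCS processes (with guarded choice only), over names `Name` and agent
identifiers `K`. -/
inductive Proc (Name K : Type) where
  | choice : List (Act' Name × Proc Name K) → Proc Name K
  | par : Proc Name K → Proc Name K → Proc Name K
  | restrict : Proc Name K → Set Name → Proc Name K
  | relabel : Proc Name K → (Name → Name) → Proc Name K
  | agent : K → Proc Name K

/-- An action may pass a restriction on the set of names `L` iff it is not (a name or
co-name) in `L`. -/
def restrictOK {Name : Type} (L : Set Name) : Act' Name → Prop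
  | .name a => a ∉ L
  | .coname a => a ∉ L
  | .tau => True

/-- Prefixing every component string in `C` with `b` (`false` = Left, `true` = Right). -/
def pre (b : Bool) (C : Set (List Bool)) : Set (List Bool) := (List.cons b) '' C

/-- The structural operational semantics of CCS with component labels
(Table 1): `CCSTrans env P α C Q` means `P --α,C--> Q`, where components are strings
over `{Left, Right}` (encoded as `List Bool` with `false` = Left, `true` = Right),
and `env` gives the defining equation of each agent identifier. -/
inductive CCSTrans {Name K : Type} (env : K → Proc Name K) :
    Proc Name K → Act' Name → Set (List Bool) → Proc Name K → Prop where
  | choice {l : List (Act' Name × Proc Name K)} {α : Act' Name} {P : Proc Name K}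
      (h : (α, P) ∈ l) :
      CCSTrans env (.choice l) α {[]} P
  | parL {P α C P' Q} :
      CCSTrans env P α C P' → CCSTrans env (.par P Q) α (pre false C) (.par P' Q)
  | parR {Q α D Q' P} :
      CCSTrans env Q α D Q' → CCSTrans env (.par P Q) α (pre true D) (.par P Q')
  | comm {P α C P' Q D Q'} :
      CCSTrans env P α C P' → CCSTrans env Q α.co D Q' → α ≠ .tau →
      CCSTrans env (.par P Q) .tau (pre false C ∪ pre true D) (.par P' Q')
  | res {P α C P' L} :
      CCSTrans env P α C P' → restrictOK L α → restrictOK L α.co →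
      CCSTrans env (.restrict P L) α C (.restrict P' L)
  | rel {P α C P' f} :
      CCSTrans env P α C P' → CCSTrans env (.relabel P f) (α.rel f) C (.relabel P' f)
  | ag {X α C P'} :
      CCSTrans env (env X) α C P' → CCSTrans env (.agent X) α C P'


lemma pre_disjoint {b : Bool} {C D : Set (List Bool)} (h : pre b C ∩ pre b D = ∅) :
    C ∩ D = ∅ := by
  ext x
  simp only [Set.mem_empty_iff_false, iff_false, Set.mem_inter_iff, not_and]
  intro hc hd
  have : (b :: x) ∈ pre b C ∩ pre b D := ⟨⟨x, hc, rfl⟩, ⟨x, hd, rfl⟩⟩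
  simp [h] at this

/-- the CCS transition system satisfies the non-interference property:
if transitions `t` and `v` have the same source and disjoint component sets, then there is
a transition from the target of `v` with the same action label and component set as `t`. -/
theorem ccs_non_interference {Name K : Type} (env : K → Proc Name K)
    (P P' P'' : Proc Name K) (α β : Act' Name) (C D : Set (List Bool))
    (ht : CCSTrans env P α C P') (hv : CCSTrans env P β D P'') (hdisj : C ∩ D = ∅) :
    ∃ Q : Proc Name K, CCSTrans env P'' α C Q := by
  induction ht generalizing P'' β D with
  | @choice l α P h =>
    cases hv
    exfalso
    have : ([] : List Bool) ∈ ({[]} : Set (List Bool)) ∩ {[]} := ⟨rfl, rfl⟩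
    simp [hdisj] at this
  | @parL P α C P' Q htP ih =>
    cases hv with
    | @parL _ _ D P2 _ hvP =>
      obtain ⟨R, hR⟩ := ih _ _ _ hvP (pre_disjoint hdisj)
      exact ⟨_, CCSTrans.parL hR⟩
    | @parR _ _ D Q2 _ hvQ =>
      exact ⟨_, CCSTrans.parL htP⟩
    | @comm _ γ D0 P2 _ D1 Q2 hvP hvQ hne =>
      have hd : pre false C ∩ pre false D0 = ∅ := by
        rw [Set.eq_empty_iff_forall_notMem] at hdisj ⊢
        intro x hx
        exact hdisj x ⟨hx.1, Or.inl hx.2⟩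
      obtain ⟨R, hR⟩ := ih _ _ _ hvP (pre_disjoint hd)
      exact ⟨_, CCSTrans.parL hR⟩
  | @parR Q α D Q' P htQ ih =>
    cases hv with
    | @parL _ _ D0 P2 _ hvP =>
      exact ⟨_, CCSTrans.parR htQ⟩
    | @parR _ _ D0 Q2 _ hvQ =>
      obtain ⟨R, hR⟩ := ih _ _ _ hvQ (pre_disjoint hdisj)
      exact ⟨_, CCSTrans.parR hR⟩
    | @comm _ γ D0 P2 _ D1 Q2 hvP hvQ hne =>
      have hd : pre true D ∩ pre true D1 = ∅ := by
        rw [Set.eq_empty_iff_forall_notMem] at hdisj ⊢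
        intro x hx
        exact hdisj x ⟨hx.1, Or.inr hx.2⟩
      obtain ⟨R, hR⟩ := ih _ _ _ hvQ (pre_disjoint hd)
      exact ⟨_, CCSTrans.parR hR⟩
  | @comm P α C P' Q D' Q' htP htQ hne ihP ihQ =>
    cases hv with
    | @parL _ _ D0 P2 _ hvP =>
      have hd : pre false C ∩ pre false D0 = ∅ := by
        rw [Set.eq_empty_iff_forall_notMem] at hdisj ⊢
        intro x hx
        exact hdisj x ⟨Or.inl hx.1, hx.2⟩
      obtain ⟨R, hR⟩ := ihP _ _ _ hvP (pre_disjoint hd)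
      exact ⟨_, CCSTrans.comm hR htQ hne⟩
    | @parR _ _ D0 Q2 _ hvQ =>
      have hd : pre true D' ∩ pre true D0 = ∅ := by
        rw [Set.eq_empty_iff_forall_notMem] at hdisj ⊢
        intro x hx
        exact hdisj x ⟨Or.inr hx.1, hx.2⟩
      obtain ⟨R, hR⟩ := ihQ _ _ _ hvQ (pre_disjoint hd)
      exact ⟨_, CCSTrans.comm htP hR hne⟩
    | @comm _ γ D0 P2 _ D1 Q2 hvP hvQ hne2 =>
      have hdL : pre false C ∩ pre false D0 = ∅ := by
        rw [Set.eq_empty_iff_forall_notMem] at hdisj ⊢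
        intro x hx
        exact hdisj x ⟨Or.inl hx.1, Or.inl hx.2⟩
      have hdR : pre true D' ∩ pre true D1 = ∅ := by
        rw [Set.eq_empty_iff_forall_notMem] at hdisj ⊢
        intro x hx
        exact hdisj x ⟨Or.inr hx.1, Or.inr hx.2⟩
      obtain ⟨R1, hR1⟩ := ihP _ _ _ hvP (pre_disjoint hdL)
      obtain ⟨R2, hR2⟩ := ihQ _ _ _ hvQ (pre_disjoint hdR)
      exact ⟨_, CCSTrans.comm hR1 hR2 hne⟩
  | @res P α C P' L htP h1 h2 ih =>
    cases hv with
    | @res _ γ D0 P2 _ hvP hv1 hv2 =>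
      obtain ⟨R, hR⟩ := ih _ _ _ hvP hdisj
      exact ⟨_, CCSTrans.res hR h1 h2⟩
  | @rel P α C P' f htP ih =>
    cases hv with
    | @rel _ γ D0 P2 _ hvP =>
      obtain ⟨R, hR⟩ := ih _ _ _ hvP hdisj
      exact ⟨_, CCSTrans.rel hR⟩
  | @ag X α C P' htP ih =>
    cases hv with
    | ag hvP =>
      obtain ⟨R, hR⟩ := ih _ _ _ hvP hdisj
      exact ⟨_, hR⟩
end

section
/- In a CLTS satisfying non-interference, if a non-blocking transition t is enabled at some state of a path π and no transition occurring in π after that state interferes with t (i.e., every later transition w in π satisfies comp(t) ∩ comp(w) = ∅), then after every later transition v of π there is a transition enabled with the same label and component set as t. Consequently, for each σ ∈ comp(t), the task T_σ is enabled in every state of the suffix of π starting at source(t) and during every transition of that suffix. -/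
universe u v w x

variable {S : Type u} {Tr : Type v} {Act : Type w} {C : Type x}

/-- in a CLTS satisfying non-interference, if a non-blocking transition `t`
is enabled at the state at position `i₀` of a path `π` and no transition occurring in `π`
from that point on interferes with `t`, then after every later transition of `π` a
transition with the same label and component set as `t` is enabled; consequently, for each
`σ ∈ comp t`, the task `T_σ = {u | σ ∈ comp u}` is enabled in every state of the suffix of
`π` starting at `i₀` and during every transition of that suffix. -/
theorem noninterference_key_lemma (M : CLTS S Tr Act C)
    (hni : ∀ t v : Tr, M.source t = M.source v → M.comp t ∩ M.comp v = ∅ →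
      ∃ u : Tr, M.source u = M.target v ∧ M.label u = M.label t ∧ M.comp u = M.comp t)
    (π : CPath M) (t : Tr) (ht : M.nonBlocking t)
    (i₀ : ℕ) (hi₀ : (i₀ : ℕ∞) ≤ π.len) (hsrc : M.source t = π.states i₀)
    (hno : ∀ j : ℕ, i₀ ≤ j → (j : ℕ∞) < π.len → M.comp t ∩ M.comp (π.trans j) = ∅) :
    (∀ j : ℕ, i₀ ≤ j → (j : ℕ∞) < π.len →
      ∃ u : Tr, M.source u = π.states (j + 1) ∧ M.label u = M.label t ∧
        M.comp u = M.comp t) ∧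
    (∀ σ ∈ M.comp t,
      (∀ i : ℕ, i₀ ≤ i → (i : ℕ∞) ≤ π.len →
        ∃ u : Tr, σ ∈ M.comp u ∧ M.nonBlocking u ∧ M.source u = π.states i) ∧
      (∀ j : ℕ, i₀ ≤ j → (j : ℕ∞) < π.len →
        ∃ u : Tr, σ ∈ M.comp u ∧ M.nonBlocking u ∧ M.source u = M.source (π.trans j) ∧
          M.comp u ∩ M.comp (π.trans j) = ∅)) := by
  have key : ∀ i : ℕ, i₀ ≤ i → (i : ℕ∞) ≤ π.len →
      ∃ u : Tr, M.source u = π.states i ∧ M.label u = M.label t ∧ M.comp u = M.comp t := by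
    intro i hi
    induction i, hi using Nat.le_induction with
    | base => exact fun _ => ⟨t, hsrc, rfl, rfl⟩
    | succ n hn ih =>
      intro hle
      have hlt : (n : ℕ∞) < π.len := by
        refine lt_of_lt_of_le ?_ hle
        exact_mod_cast Nat.lt_succ_self n
      obtain ⟨u, hu1, hu2, hu3⟩ := ih hlt.le
      have hsrceq : M.source u = M.source (π.trans n) := by rw [hu1, π.src n hlt]
      have hdisj : M.comp u ∩ M.comp (π.trans n) = ∅ := by rw [hu3]; exact hno n hn hlt
      obtain ⟨u', h1, h2, h3⟩ := hni u (π.trans n) hsrceq hdisj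
      exact ⟨u', by rw [h1, π.tgt n hlt], h2.trans hu2, h3.trans hu3⟩
  constructor
  · intro j hj hlt
    have hle : ((j + 1 : ℕ) : ℕ∞) ≤ π.len := by
      push_cast
      exact Order.add_one_le_of_lt hlt
    exact key (j + 1) (le_trans hj (Nat.le_succ j)) hle
  · intro σ hσ
    constructor
    · intro i hi hile
      obtain ⟨u, hu1, hu2, hu3⟩ := key i hi hile
      exact ⟨u, hu3 ▸ hσ, by simpa [CLTS.nonBlocking, hu2] using ht, hu1⟩
    · intro j hj hlt
      obtain ⟨u, hu1, hu2, hu3⟩ := key j hj hlt.le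
      refine ⟨u, hu3 ▸ hσ, by simpa [CLTS.nonBlocking, hu2] using ht, ?_, ?_⟩
      · rw [hu1, π.src j hlt]
      · rw [hu3]; exact hno j hj hlt
end
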